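/- Let F_q be a finite field of characteristic ≠ 2,3 and E': y² = x³ + A'x + B' an elliptic curve over F_q. Then E' has an F_q-rational point of order 2 (equivalently even group order, equivalently even trace) if and only if there exists an elliptic curve E over F_q with Hess(E) = E' (as curves in short Weierstrass form up to the standard change of variables). -/

import Mathlib

/-!
Both sides are equivalent to the cubic `x³ + A'x + B'` having a root in `F`. A nonzero point of
order 2 on a short Weierstrass curve is exactly a point `(x₀, 0)`. The Hessian `Hess(E)` always has
the rational root `-B/A²`, and in characteristic `≠ 2, 3` a change of variables between short
Weierstrass curves is a scaling `(x, y) ↦ (u²x, u³y)`, which preserves that property. Conversely, a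
root `x₀` exhibits `E'` as the translate of `y² = x³ + 3x₀x² + βx` with `β = 3x₀² + A'`, and
nondegeneracy of `E'` makes `β` invertible, so that `A = -1/(3β)`, `B = -x₀/(9β²)` works.
-/

/-- The short Weierstrass form of the Hessian of `y² = x³ + Ax + B` (for `A ≠ 0`):
`y² = x³ - ((A³/3+3B²)/A⁴)x - ((A³B/3+2B³)/A⁶)`. -/
noncomputable def hessCurve {F : Type*} [Field F] (A B : F) : WeierstrassCurve F :=
  { a₁ := 0, a₂ := 0, a₃ := 0,
    a₄ := -(A ^ 3 / 3 + 3 * B ^ 2) / A ^ 4,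
    a₆ := -(A ^ 3 * B / 3 + 2 * B ^ 3) / A ^ 6 }

namespace WeierstrassCurve

instance isShortNF_mk {R : Type*} [CommRing R] (a₄ a₆ : R) :
    (⟨0, 0, 0, a₄, a₆⟩ : WeierstrassCurve R).IsShortNF :=
  ⟨rfl, rfl, rfl⟩

variable {F : Type*} [Field F]

lemma Affine.exists_two_torsion_iff [DecidableEq F] (W : Affine F) :
    (∃ P : W.Point, P ≠ 0 ∧ (2 : ℤ) • P = 0) ↔
      ∃ x y : F, W.Nonsingular x y ∧ y = W.negY x y := by
  constructor
  · rintro ⟨_ | ⟨x, y, h⟩, hP, h2P⟩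
    · exact absurd rfl hP
    · refine ⟨x, y, h, by_contra fun hy ↦ ?_⟩
      rw [two_zsmul, Point.add_self_of_Y_ne hy] at h2P
      exact Point.some_ne_zero _ h2P
  · rintro ⟨x, y, h, hy⟩
    exact ⟨.some _ _ h, Point.some_ne_zero h, by rw [two_zsmul, Point.add_self_of_Y_eq hy]⟩

variable (W : WeierstrassCurve F) [W.IsShortNF]

lemma eq_negY_iff_of_isShortNF (h2 : (2 : F) ≠ 0) (x y : F) :
    y = W.toAffine.negY x y ↔ y = 0 := by
  rw [Affine.negY, a₁_of_isShortNF, a₃_of_isShortNF, zero_mul, sub_zero, sub_zero,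
    eq_neg_iff_add_eq_zero, ← two_mul, mul_eq_zero, or_iff_right h2]

lemma exists_two_torsion_iff_exists_root [DecidableEq F] (h2 : (2 : F) ≠ 0)
    (hΔ : 4 * W.a₄ ^ 3 + 27 * W.a₆ ^ 2 ≠ 0) :
    (∃ P : W.toAffine.Point, P ≠ 0 ∧ (2 : ℤ) • P = 0) ↔
      ∃ x : F, x ^ 3 + W.a₄ * x + W.a₆ = 0 := by
  have h16 : (-16 : F) ≠ 0 := by
    rw [show (-16 : F) = -2 ^ 4 by norm_num, neg_ne_zero]
    exact pow_ne_zero 4 h2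
  have hW : W.Δ ≠ 0 := by
    rw [Δ_of_isShortNF]
    exact mul_ne_zero h16 hΔ
  simp only [Affine.exists_two_torsion_iff, eq_negY_iff_of_isShortNF W h2,
    ← Affine.equation_iff_nonsingular_of_Δ_ne_zero hW, Affine.equation_iff,
    a₁_of_isShortNF, a₂_of_isShortNF, a₃_of_isShortNF]
  constructor
  · rintro ⟨x, _, h, rfl⟩
    exact ⟨x, by linear_combination -h⟩
  · rintro ⟨x, h⟩
    exact ⟨x, 0, by linear_combination -h, rfl⟩

variable {W} {W' : WeierstrassCurve F} [W'.IsShortNF] {C : VariableChange F}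

lemma VariableChange.rst_eq_zero_of_isShortNF (h2 : (2 : F) ≠ 0) (h3 : (3 : F) ≠ 0)
    (hC : C • W = W') : C.r = 0 ∧ C.s = 0 ∧ C.t = 0 := by
  subst hC
  have ha₁ : C.u⁻¹ * (W.a₁ + 2 * C.s) = 0 := (C • W).a₁_of_isShortNF
  have ha₂ : C.u⁻¹ ^ 2 * (W.a₂ - C.s * W.a₁ + 3 * C.r - C.s ^ 2) = 0 :=
    (C • W).a₂_of_isShortNF
  have ha₃ : C.u⁻¹ ^ 3 * (W.a₃ + C.r * W.a₁ + 2 * C.t) = 0 := (C • W).a₃_of_isShortNF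
  simp only [a₁_of_isShortNF, a₂_of_isShortNF, a₃_of_isShortNF, mul_eq_zero, pow_eq_zero_iff,
    Units.ne_zero, false_or, zero_add, mul_zero, sub_zero, h2, ne_eq, OfNat.ofNat_ne_zero,
    not_false_eq_true] at ha₁ ha₂ ha₃
  rw [ha₁, zero_pow two_ne_zero, sub_zero, mul_eq_zero, or_iff_right h3] at ha₂
  exact ⟨ha₂, ha₁, ha₃⟩

lemma exists_root_of_variableChange_eq (h2 : (2 : F) ≠ 0) (h3 : (3 : F) ≠ 0)
    (hC : C • W = W') {x : F} (hx : x ^ 3 + W.a₄ * x + W.a₆ = 0) :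
    ∃ x' : F, x' ^ 3 + W'.a₄ * x' + W'.a₆ = 0 := by
  obtain ⟨hr, hs, ht⟩ := VariableChange.rst_eq_zero_of_isShortNF h2 h3 hC
  refine ⟨C.u⁻¹ ^ 2 * x, ?_⟩
  subst hC
  simp only [variableChange_a₄, variableChange_a₆, hr, hs, ht, a₁_of_isShortNF,
    a₂_of_isShortNF, a₃_of_isShortNF, Units.val_inv_eq_inv_val]
  linear_combination (C.u : F)⁻¹ ^ 6 * hx

end WeierstrassCurve

section Hessian

open WeierstrassCurve

variable {F : Type*} [Field F]

instance isShortNF_hessCurve (A B : F) : (hessCurve A B).IsShortNF :=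
  ⟨rfl, rfl, rfl⟩

lemma hessCurve_root (A B : F) :
    (-B / A ^ 2) ^ 3 + (hessCurve A B).a₄ * (-B / A ^ 2) + (hessCurve A B).a₆ = 0 := by
  simp only [hessCurve]
  ring

lemma hessCurve_neg_mul_sq (h3 : (3 : F) ≠ 0) {A : F} (hA : A ≠ 0) (x₀ : F) :
    hessCurve A (-x₀ * A ^ 2) =
      ⟨0, 0, 0, -(3 * A)⁻¹ - 3 * x₀ ^ 2, 2 * x₀ ^ 3 + (3 * A)⁻¹ * x₀⟩ := by
  ext <;> simp only [hessCurve] <;> field_simp <;> ring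

lemma exists_hessCurve_eq_of_root (h3 : (3 : F) ≠ 0) {a b x₀ : F}
    (hΔ : 4 * a ^ 3 + 27 * b ^ 2 ≠ 0) (hx₀ : x₀ ^ 3 + a * x₀ + b = 0) :
    ∃ A B : F, A ≠ 0 ∧ 4 * A ^ 3 + 27 * B ^ 2 ≠ 0 ∧ hessCurve A B = ⟨0, 0, 0, a, b⟩ := by
  set β := 3 * x₀ ^ 2 + a
  have hΔ_eq : 4 * a ^ 3 + 27 * b ^ 2 = β ^ 2 * (4 * β - 9 * x₀ ^ 2) := by
    linear_combination 27 * (b - x₀ ^ 3 - a * x₀) * hx₀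
  obtain ⟨hβ2, hδ⟩ := mul_ne_zero_iff.mp (hΔ_eq ▸ hΔ)
  have hβ : β ≠ 0 := pow_ne_zero_iff two_ne_zero |>.mp hβ2
  set A := -(3 * β)⁻¹
  have hAβ : 3 * A * β = -1 := by
    simp only [A]
    field_simp
  have hA : A ≠ 0 := neg_ne_zero.mpr (inv_ne_zero (mul_ne_zero h3 hβ))
  have h3A : (3 * A)⁻¹ = -β := inv_eq_of_mul_eq_one_right (by linear_combination -hAβ)
  refine ⟨A, -x₀ * A ^ 2, hA, ?_, ?_⟩
  · have : 4 * A ^ 3 + 27 * (-x₀ * A ^ 2) ^ 2 = -3 * A ^ 4 * (4 * β - 9 * x₀ ^ 2) := by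
      linear_combination 4 * A ^ 3 * hAβ
    rw [this]
    exact mul_ne_zero (mul_ne_zero (neg_ne_zero.mpr h3) (pow_ne_zero 4 hA)) hδ
  · rw [hessCurve_neg_mul_sq h3 hA, h3A]
    congr 1
    · ring
    · linear_combination -hx₀

end Hessian

open Classical in
theorem even_order_iff_hessian_general {F : Type*} [Field F]
    (h2 : (2 : F) ≠ 0) (h3 : (3 : F) ≠ 0) (A' B' : F)
    (hΔ' : 4 * A' ^ 3 + 27 * B' ^ 2 ≠ 0) :
    (∃ P : (WeierstrassCurve.toAffine
        { a₁ := 0, a₂ := 0, a₃ := 0, a₄ := A', a₆ := B' : WeierstrassCurve F }).Point,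
      P ≠ 0 ∧ (2 : ℤ) • P = 0) ↔
    (∃ A B : F, A ≠ 0 ∧ 4 * A ^ 3 + 27 * B ^ 2 ≠ 0 ∧
      ∃ C : WeierstrassCurve.VariableChange F,
        C • hessCurve A B =
          { a₁ := 0, a₂ := 0, a₃ := 0, a₄ := A', a₆ := B' : WeierstrassCurve F }) := by
  rw [WeierstrassCurve.exists_two_torsion_iff_exists_root _ h2 hΔ']
  constructor
  · rintro ⟨x₀, hx₀⟩
    obtain ⟨A, B, hA, hAB, hE⟩ := exists_hessCurve_eq_of_root h3 hΔ' hx₀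
    exact ⟨A, B, hA, hAB, 1, by rw [one_smul, hE]⟩
  · rintro ⟨A, B, -, -, C, hC⟩
    exact WeierstrassCurve.exists_root_of_variableChange_eq h2 h3 hC (hessCurve_root A B)

open Classical in
/-- over a finite field `F` of characteristic `≠ 2,3`, an elliptic curve
`E' : y² = x³ + A'x + B'` has an `F`-rational point of order 2 (equivalently even order,
equivalently even trace) iff there exists an elliptic curve `E : y² = x³ + Ax + B` over `F`
with `Hess(E) = E'` up to the standard change of variables. -/
theorem even_order_iff_hessian {F : Type*} [Field F] [Fintype F]
    (h2 : (2 : F) ≠ 0) (h3 : (3 : F) ≠ 0) (A' B' : F)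
    (hΔ' : 4 * A' ^ 3 + 27 * B' ^ 2 ≠ 0) :
    (∃ P : (WeierstrassCurve.toAffine
        { a₁ := 0, a₂ := 0, a₃ := 0, a₄ := A', a₆ := B' : WeierstrassCurve F }).Point,
      P ≠ 0 ∧ (2 : ℤ) • P = 0) ↔
    (∃ A B : F, A ≠ 0 ∧ 4 * A ^ 3 + 27 * B ^ 2 ≠ 0 ∧
      ∃ C : WeierstrassCurve.VariableChange F,
        C • hessCurve A B =
          { a₁ := 0, a₂ := 0, a₃ := 0, a₄ := A', a₆ := B' : WeierstrassCurve F }) :=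
  even_order_iff_hessian_general h2 h3 A' B' hΔ'
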